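/- Telescoping identification under parallel trends through baseline covariates (Section 3 derivation, first reduction): Under parallel trends, for every t ∈ {1,…,τ}, μ_t = E[Y_0(ā*)] + Σ_{k=1}^t Σ_{w_0} E[Y_k(ā*) − Y_{k−1}(ā*) | A_0 = a*_0, W_0 = w_0] · P(W_0 = w_0), the inner sum over w_0 with P(W_0 = w_0, A_0 = a*_0) > 0, provided P(W_0 = w_0) > 0 implies P(W_0 = w_0, A_0 = a*_0) > 0 (which holds in particular under a staggered discontinuation design). -/

import Mathlib

/-!
Telescoping, `μ_t - μ_0` is the sum over `k ≤ t` of the mean increments `E[Y_k(ā*) - Y_{k-1}(ā*)]`.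
Split each increment over the baseline strata `{W_0 = w_0}`. On a stratum with
`P(W_0 = w_0, A_0 = a*_0) > 0`, parallel trends at `k = 0` says the stratum mean of the increment
equals its mean among those who also follow `a*_0`; every other stratum is null by assumption and
contributes nothing on either side.
-/

open MeasureTheory
open scoped Classical

namespace DID

variable {Ω 𝒲 𝒜 : Type*}

/-- Event: the covariate history `W̄_{n-1}` equals `w` (i.e. `W_s = w_s` for `s = 0,…,n-1`). -/
def Whist (W : ℕ → Ω → 𝒲) {n : ℕ} (w : Fin n → 𝒲) : Set Ω :=
  {ω | ∀ s : Fin n, W s ω = w s}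

/-- Event: the treatment history `Ā_{n-1}` equals the plan `a` (for `n = 0`, the whole space). -/
def Ahist (A : ℕ → Ω → 𝒜) (a : ℕ → 𝒜) (n : ℕ) : Set Ω :=
  {ω | ∀ s, s < n → A s ω = a s}

/-- Restriction of a history to its first `m` coordinates. -/
def prefixF {α : Type*} {n : ℕ} (w : Fin n → α) {m : ℕ} (h : m ≤ n) : Fin m → α :=
  fun i => w (Fin.castLE h i)

/-- The observed covariate history `W̄_{n-1}(ω)`. -/
def obsHist (W : ℕ → Ω → 𝒲) (n : ℕ) (ω : Ω) : Fin n → 𝒲 := fun i => W i ω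

variable [MeasurableSpace Ω]

/-- Conditional expectation `E[X | B]` of `X` given the event `B`. -/
noncomputable def cexp (P : Measure Ω) (X : Ω → ℝ) (B : Set Ω) : ℝ :=
  (∫ ω in B, X ω ∂P) / (P B).toReal

/-- Conditional probability `P(C | B)`. -/
noncomputable def cprob (P : Measure Ω) (C B : Set Ω) : ℝ :=
  (P (C ∩ B)).toReal / (P B).toReal

/-- `∏_{m=0}^k P(W_m = w_m | W̄_{m-1} = w̄_{m-1}, Ā_{m-1} = ā*_{m-1})`. -/
noncomputable def wgt (P : Measure Ω) (W : ℕ → Ω → 𝒲) (A : ℕ → Ω → 𝒜) (a : ℕ → 𝒜)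
    (k : ℕ) (w : Fin (k + 1) → 𝒲) : ℝ :=
  ∏ m : Fin (k + 1),
    cprob P {ω | W m ω = w m}
      (Whist W (prefixF w (le_of_lt m.isLt)) ∩ Ahist A a m)

/-- Staggered discontinuation design: `P(A_0 = a*_0) = 1`. -/
def Staggered (P : Measure Ω) (A : ℕ → Ω → 𝒜) (a : ℕ → 𝒜) : Prop :=
  P {ω | A 0 ω = a 0} = 1

/-- SUTVA: a.s., if `Ā_t = ā*_t` then `Y_t = Y_t(ā*)`. -/
def SUTVA (P : Measure Ω) (A : ℕ → Ω → 𝒜) (a : ℕ → 𝒜) (Y Ystar : ℕ → Ω → ℝ)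
    (τ : ℕ) : Prop :=
  ∀ t ≤ τ, ∀ᵐ ω ∂P, (∀ s ≤ t, A s ω = a s) → Y t ω = Ystar t ω

/-- Positivity. -/
def Positivity (P : Measure Ω) (W : ℕ → Ω → 𝒲) (A : ℕ → Ω → 𝒜) (a : ℕ → 𝒜)
    (τ : ℕ) : Prop :=
  ∀ t, 1 ≤ t → t ≤ τ → ∀ w : Fin (t + 1) → 𝒲,
    0 < P (Whist W w ∩ Ahist A a t) → 0 < P (Whist W w ∩ Ahist A a (t + 1))

/-- Parallel trends. -/
def ParallelTrends (P : Measure Ω) (W : ℕ → Ω → 𝒲) (A : ℕ → Ω → 𝒜) (a : ℕ → 𝒜)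
    (Ystar : ℕ → Ω → ℝ) (τ : ℕ) : Prop :=
  ∀ t, 1 ≤ t → t ≤ τ → ∀ k, k ≤ t → ∀ w : Fin (k + 1) → 𝒲,
    0 < P (Whist W w ∩ Ahist A a (k + 1)) →
      cexp P (fun ω => Ystar t ω - Ystar (t - 1) ω) (Whist W w ∩ Ahist A a k) =
        cexp P (fun ω => Ystar t ω - Ystar (t - 1) ω) (Whist W w ∩ Ahist A a (k + 1))

/-- The g-formula `φ_{j,k}`. -/
noncomputable def gphi (P : Measure Ω) (W : ℕ → Ω → 𝒲) (A : ℕ → Ω → 𝒜) (a : ℕ → 𝒜)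
    (Y : ℕ → Ω → ℝ) (j k : ℕ) : ℝ :=
  ∑' w : Fin (k + 1) → 𝒲,
    if 0 < P (Whist W w ∩ Ahist A a (k + 1)) then
      cexp P (Y j) (Whist W w ∩ Ahist A a (k + 1)) * wgt P W A a k w
    else 0

/-- The parallel trends g-formula `ψ_t`. -/
noncomputable def psi (P : Measure Ω) (W : ℕ → Ω → 𝒲) (A : ℕ → Ω → 𝒜) (a : ℕ → 𝒜)
    (Y : ℕ → Ω → ℝ) (t : ℕ) : ℝ :=
  (∫ ω, Y 0 ω ∂P) +
    ∑ k ∈ Finset.Icc 1 t, ∑' w : Fin (k + 1) → 𝒲,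
      if 0 < P (Whist W w ∩ Ahist A a (k + 1)) then
        cexp P (fun ω => Y k ω - Y (k - 1) ω) (Whist W w ∩ Ahist A a (k + 1)) *
          wgt P W A a k w
      else 0

theorem _root_.Finset.sum_Icc_one_sub_pred {G : Type*} [AddCommGroup G] (f : ℕ → G) (t : ℕ) :
    ∑ k ∈ Finset.Icc 1 t, (f k - f (k - 1)) = f t - f 0 := by
  induction t with
  | zero => simp
  | succ t ih =>
    rw [Finset.sum_Icc_succ_top (Nat.le_add_left 1 t), ih, Nat.add_sub_cancel]
    abel

theorem _root_.MeasureTheory.integral_sub_eq_sum_integral_increments (μ : Measure Ω)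
    (Y : ℕ → Ω → ℝ) (t : ℕ) (hY : ∀ k ≤ t, Integrable (Y k) μ) :
    (∫ ω, Y t ω ∂μ) - ∫ ω, Y 0 ω ∂μ =
      ∑ k ∈ Finset.Icc 1 t, ∫ ω, (Y k ω - Y (k - 1) ω) ∂μ := by
  rw [← Finset.sum_Icc_one_sub_pred (fun k => ∫ ω, Y k ω ∂μ)]
  refine Finset.sum_congr rfl fun k hk => (integral_sub (hY k ?_) (hY (k - 1) ?_)).symm <;>
    grind

theorem _root_.MeasureTheory.integral_eq_tsum_setIntegral_fiber [MeasurableSpace 𝒲]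
    [MeasurableSingletonClass 𝒲] [Countable 𝒲] {μ : Measure Ω} {V : Ω → 𝒲}
    (hV : Measurable V) {f : Ω → ℝ} (hf : Integrable f μ) :
    ∫ ω, f ω ∂μ = ∑' w, ∫ ω in {ω | V ω = w}, f ω ∂μ := by
  have hcover : (⋃ w, {ω | V ω = w}) = Set.univ := Set.iUnion_eq_univ_iff.2 fun ω => ⟨V ω, rfl⟩
  have hdisj : Pairwise (Function.onFun Disjoint fun w => {ω | V ω = w}) :=
    fun _ _ hne => Set.disjoint_left.2 fun _ hx hy => hne (hx.symm.trans hy)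
  rw [← setIntegral_univ, ← hcover]
  exact integral_iUnion (fun w => hV (measurableSet_singleton w)) hdisj
    (by rw [hcover]; exact hf.integrableOn)

theorem setIntegral_eq_cexp_mul_toReal (P : Measure Ω) [IsFiniteMeasure P] (X : Ω → ℝ)
    (B : Set Ω) :
    ∫ ω in B, X ω ∂P = cexp P X B * (P B).toReal := by
  by_cases hB : P B = 0
  · rw [Measure.restrict_eq_zero.2 hB, integral_zero_measure, hB, ENNReal.toReal_zero, mul_zero]
  · rw [cexp, div_mul_cancel₀]
    exact ENNReal.toReal_ne_zero.2 ⟨hB, measure_ne_top P B⟩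

theorem ParallelTrends.cexp_baseline {P : Measure Ω} {W : ℕ → Ω → 𝒲} {A : ℕ → Ω → 𝒜}
    {a : ℕ → 𝒜} {Ystar : ℕ → Ω → ℝ} {τ : ℕ} (hpt : ParallelTrends P W A a Ystar τ)
    {k : ℕ} (hk1 : 1 ≤ k) (hkτ : k ≤ τ) {w0 : 𝒲}
    (hpos : 0 < P ({ω | W 0 ω = w0} ∩ {ω | A 0 ω = a 0})) :
    cexp P (fun ω => Ystar k ω - Ystar (k - 1) ω) {ω | W 0 ω = w0} =
      cexp P (fun ω => Ystar k ω - Ystar (k - 1) ω) ({ω | W 0 ω = w0} ∩ {ω | A 0 ω = a 0}) := by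
  have hW : Whist W (fun _ : Fin 1 => w0) = {ω | W 0 ω = w0} := by ext; simp [Whist]
  have hA₀ : Ahist A a 0 = Set.univ := by ext; simp [Ahist]
  have hA₁ : Ahist A a 1 = {ω | A 0 ω = a 0} := by ext; simp [Ahist]
  have h := hpt k hk1 hkτ 0 (Nat.zero_le k) (fun _ => w0)
  rw [hW, hA₀, hA₁, Set.inter_univ] at h
  exact h hpos

theorem integral_increment_eq_tsum_baseline
    [MeasurableSpace 𝒲] [MeasurableSingletonClass 𝒲] [Countable 𝒲]
    {P : Measure Ω} [IsFiniteMeasure P] {W : ℕ → Ω → 𝒲} {A : ℕ → Ω → 𝒜}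
    {a : ℕ → 𝒜} {Ystar : ℕ → Ω → ℝ} {τ : ℕ} (hW : Measurable (W 0))
    (hpt : ParallelTrends P W A a Ystar τ)
    (hW0 : ∀ w0 : 𝒲, 0 < P {ω | W 0 ω = w0} →
      0 < P ({ω | W 0 ω = w0} ∩ {ω | A 0 ω = a 0}))
    {k : ℕ} (hk1 : 1 ≤ k) (hkτ : k ≤ τ)
    (hint : Integrable (fun ω => Ystar k ω - Ystar (k - 1) ω) P) :
    ∫ ω, (Ystar k ω - Ystar (k - 1) ω) ∂P =
      ∑' w0 : 𝒲,
        if 0 < P ({ω | W 0 ω = w0} ∩ {ω | A 0 ω = a 0}) then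
          cexp P (fun ω => Ystar k ω - Ystar (k - 1) ω)
              ({ω | W 0 ω = w0} ∩ {ω | A 0 ω = a 0}) *
            (P {ω | W 0 ω = w0}).toReal
        else 0 := by
  rw [integral_eq_tsum_setIntegral_fiber hW hint]
  congr 1 with w0
  rw [setIntegral_eq_cexp_mul_toReal]
  split_ifs with hpos
  · rw [hpt.cexp_baseline hk1 hkτ hpos]
  · have hnull : P {ω | W 0 ω = w0} = 0 := nonpos_iff_eq_zero.1 (not_lt.1 (mt (hW0 w0) hpos))
    rw [hnull, ENNReal.toReal_zero, mul_zero]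

theorem telescoping_first_reduction_general
    [MeasurableSpace 𝒲] [MeasurableSingletonClass 𝒲] [Countable 𝒲]
    (P : Measure Ω) [IsProbabilityMeasure P] (τ : ℕ)
    (W : ℕ → Ω → 𝒲) (A : ℕ → Ω → 𝒜) (Ystar : ℕ → Ω → ℝ) (a : ℕ → 𝒜)
    (hWmeas : ∀ t, Measurable (W t))
    (hYstar : ∀ t ≤ τ, Integrable (Ystar t) P)
    (hpt : ParallelTrends P W A a Ystar τ)
    (hW0 : ∀ w0 : 𝒲, 0 < P {ω | W 0 ω = w0} →
      0 < P ({ω | W 0 ω = w0} ∩ {ω | A 0 ω = a 0})) :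
    ∀ t, 1 ≤ t → t ≤ τ →
      (∫ ω, Ystar t ω ∂P) =
        (∫ ω, Ystar 0 ω ∂P) +
          ∑ k ∈ Finset.Icc 1 t, ∑' w0 : 𝒲,
            if 0 < P ({ω | W 0 ω = w0} ∩ {ω | A 0 ω = a 0}) then
              cexp P (fun ω => Ystar k ω - Ystar (k - 1) ω)
                  ({ω | W 0 ω = w0} ∩ {ω | A 0 ω = a 0}) *
                (P {ω | W 0 ω = w0}).toReal
            else 0 := by
  intro t _ htτ
  rw [← sub_eq_iff_eq_add',
    integral_sub_eq_sum_integral_increments P Ystar t fun k hk => hYstar k (hk.trans htτ)]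
  refine Finset.sum_congr rfl fun k hk => ?_
  obtain ⟨hk1, hkt⟩ := Finset.mem_Icc.1 hk
  have hkτ : k ≤ τ := hkt.trans htτ
  exact integral_increment_eq_tsum_baseline (hWmeas 0) hpt hW0 hk1 hkτ
    ((hYstar k hkτ).sub (hYstar (k - 1) ((k.sub_le 1).trans hkτ)))

/-- **Telescoping identification under parallel trends through baseline covariates
(Section 3 derivation, first reduction).** Under parallel trends, for every
`t ∈ {1,…,τ}`,
`μ_t = E[Y_0(ā*)] + Σ_{k=1}^t Σ_{w_0} E[Y_k(ā*) − Y_{k−1}(ā*) | A_0 = a*_0, W_0 = w_0]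
· P(W_0 = w_0)`, the inner sum over `w_0` with `P(W_0 = w_0, A_0 = a*_0) > 0`, provided
`P(W_0 = w_0) > 0` implies `P(W_0 = w_0, A_0 = a*_0) > 0` (which holds in particular under
a staggered discontinuation design). -/
theorem telescoping_first_reduction
    [MeasurableSpace 𝒲] [MeasurableSingletonClass 𝒲] [Countable 𝒲]
    [MeasurableSpace 𝒜] [MeasurableSingletonClass 𝒜] [Countable 𝒜]
    (P : Measure Ω) [IsProbabilityMeasure P] (τ : ℕ)
    (W : ℕ → Ω → 𝒲) (A : ℕ → Ω → 𝒜) (Ystar : ℕ → Ω → ℝ) (a : ℕ → 𝒜)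
    (hWmeas : ∀ t, Measurable (W t)) (hAmeas : ∀ t, Measurable (A t))
    (hYstar : ∀ t ≤ τ, Integrable (Ystar t) P)
    (hpt : ParallelTrends P W A a Ystar τ)
    (hW0 : ∀ w0 : 𝒲, 0 < P {ω | W 0 ω = w0} →
      0 < P ({ω | W 0 ω = w0} ∩ {ω | A 0 ω = a 0})) :
    ∀ t, 1 ≤ t → t ≤ τ →
      (∫ ω, Ystar t ω ∂P) =
        (∫ ω, Ystar 0 ω ∂P) +
          ∑ k ∈ Finset.Icc 1 t, ∑' w0 : 𝒲,
            if 0 < P ({ω | W 0 ω = w0} ∩ {ω | A 0 ω = a 0}) then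
              cexp P (fun ω => Ystar k ω - Ystar (k - 1) ω)
                  ({ω | W 0 ω = w0} ∩ {ω | A 0 ω = a 0}) *
                (P {ω | W 0 ω = w0}).toReal
            else 0 :=
  telescoping_first_reduction_general P τ W A Ystar a hWmeas hYstar hpt hW0

end DID
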